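/- Overflow/underflow step in Theorem on finite embeddability: if A is SIM and finitely embeddable in B, then there exists an infinite hyperfinite interval I in *ℕ with g_{*A}(I) ≈ 0 and some t ∈ *ℕ with t + (*A ∩ I) ⊆ *B. -/

import Mathlib

open Filter Set MeasureTheory

/-- The hypernatural numbers: the ultrapower of `ℕ` by the hyperfilter. -/
abbrev SN : Type := Filter.Germ (Filter.hyperfilter ℕ : Filter ℕ) ℕ

/-- Membership of a hypernatural in the internal set determined by a sequence of sets. -/
def memF (F : ℕ → Set ℕ) (x : SN) : Prop :=
  x.liftOn (fun f => ∀ᶠ i in (Filter.hyperfilter ℕ : Filter ℕ), f i ∈ F i)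
    (by
      intro f g h
      exact propext (eventually_congr (h.mono fun i hi => by rw [hi])))

/-- A set of hypernaturals is internal if it is determined by a sequence of subsets of `ℕ`. -/
def InternalSet (A : Set SN) : Prop := ∃ F : ℕ → Set ℕ, A = {x | memF F x}

/-- The nonstandard extension `*A ⊆ *ℕ` of a set `A ⊆ ℕ`. -/
def starN (A : Set ℕ) : Set SN := {x | memF (fun _ => A) x}

/-- The canonical map from the hypernaturals to the hyperreals. -/
noncomputable def toR (x : SN) : Hyperreal := Filter.Germ.map (fun n : ℕ => (n : ℝ)) x

/-- `[y,z]` is an infinite (hyperfinite) interval. -/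
def InfInterval (y z : SN) : Prop := ∀ n : ℕ, y + (n : SN) < z

/-- The map `st_I : I → [0,1]`, `st_I(a) = st((a-y)/(z-y))`. -/
noncomputable def stI (y z : SN) (x : SN) : ℝ :=
  Hyperreal.st ((toR x - toR y) / (toR z - toR y))

/-- `λ_I(A)`: Lebesgue measure of the standard part image of `A ∩ I`, `I = [y,z]`. -/
noncomputable def lam (A : Set SN) (y z : SN) : ℝ :=
  (volume (stI y z '' (A ∩ Set.Icc y z))).toReal

/-- `g_A(I)`: the normalized length of the largest gap of `A` on `I = [y,z]`. -/
noncomputable def gap (A : Set SN) (y z : SN) : ℝ :=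
  sSup {r : ℝ | 0 ≤ r ∧ ∃ c d : SN, c ∈ Set.Icc y z ∧ d ∈ Set.Icc y z ∧ c ≤ d ∧
    Set.Icc c d ∩ A = ∅ ∧ (r : Hyperreal) ≤ (toR d - toR c) / (toR z - toR y)}

/-- `A` has the interval-measure (IM) property on `I = [y,z]`. -/
def IMOn (A : Set SN) (y z : SN) : Prop :=
  ∀ ε : ℝ, 0 < ε → ∃ δ : ℝ, 0 < δ ∧ ∀ c d : SN, y ≤ c → c ≤ d → d ≤ z →
    InfInterval c d → gap A c d ≤ δ → 1 - ε ≤ lam A c d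

/-- `A` has the enhanced IM property on `I = [y,z]`. -/
def EnhancedIMOn (A : Set SN) (y z : SN) : Prop := IMOn A y z ∧ 0 < lam A y z

/-- `A ⊆ ℕ` has the standard interval-measure (SIM) property. -/
def SIM (A : Set ℕ) : Prop :=
  (∀ y z : SN, InfInterval y z → IMOn (starN A) y z) ∧
  ∃ y z : SN, InfInterval y z ∧ EnhancedIMOn (starN A) y z

/-- `A ⊆ ℕ` is supra-SIM if it contains a SIM set. -/
def SupraSIM (A : Set ℕ) : Prop := ∃ B ⊆ A, SIM B

/-- `A` is finitely embedded in `B`: every finite subset of `A` has a translate in `B`. -/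
def FinEmbed (A B : Set ℕ) : Prop := ∀ F : Finset ℕ, ↑F ⊆ A → ∃ t : ℕ, ∀ a ∈ F, t + a ∈ B


/-!
If for some `n` every interval `[a, b]` of `ℕ` of length at least `n` contained a gap of `A`
longer than `(b - a) / n`, then on an infinite interval `I` with `λ_I(*A) > 0` the standard-part
image of `*A ∩ I` would be uniformly porous in `[0, 1]`: every `[p, q]` misses an open interval of
length `(q - p) / n`. Uniformly porous sets are Lebesgue-null, a contradiction. Hence for every `n`
there is an interval `[a n, b n]` of length at least `n` on which all gaps of `A` are at most
`(b n - a n) / n`, and, `A` being finitely embeddable in `B`, some `t n + (A ∩ [a n, b n]) ⊆ B`.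
The classes of the sequences `a`, `b`, `t` in the ultrapower give the interval and the translate;
the gap ratio of `*A` on it is below `1 / n` for every `n`, so it is `0`.
-/

open Topology

local notation "𝓗" => (Filter.hyperfilter ℕ : Filter ℕ)

def PorousInUnitInterval (ρ : ℝ) (E : Set ℝ) : Prop :=
  ∀ p q : ℝ, 0 ≤ p → p < q → q ≤ 1 →
    ∃ u v : ℝ, p ≤ u ∧ v ≤ q ∧ ρ * (q - p) ≤ v - u ∧ Disjoint E (Ioo u v)

namespace PorousInUnitInterval

variable {ρ : ℝ} {E : Set ℝ}

theorem le_one (h : PorousInUnitInterval ρ E) : ρ ≤ 1 := by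
  obtain ⟨u, v, hu, hv, hlen, -⟩ := h 0 1 le_rfl one_pos le_rfl
  linarith

theorem volume_inter_Icc_le (h : PorousInUnitInterval ρ E) (hρ : 0 ≤ ρ) (k : ℕ) {p q : ℝ}
    (hp : 0 ≤ p) (hq : q ≤ 1) :
    volume (E ∩ Icc p q) ≤ ENNReal.ofReal ((1 - ρ) ^ k * (q - p)) := by
  induction k generalizing p q with
  | zero => simpa only [pow_zero, one_mul, Real.volume_Icc] using
      measure_mono (μ := volume) (inter_subset_right (s := E) (t := Icc p q))
  | succ k ih =>
    rcases le_or_gt q p with hqp | hpq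
    · calc volume (E ∩ Icc p q) ≤ volume (Icc p q) := measure_mono inter_subset_right
        _ = 0 := by rw [Real.volume_Icc, ENNReal.ofReal_of_nonpos (by linarith)]
        _ ≤ _ := zero_le
    obtain ⟨u, v, hpu, hvq, hlen, hgap⟩ := h p q hp hpq hq
    have huv : u ≤ v := by nlinarith
    have hcover : E ∩ Icc p q ⊆ (E ∩ Icc p u) ∪ (E ∩ Icc v q) := by
      rintro x ⟨hxE, hpx, hxq⟩
      by_cases hxu : x ≤ u
      · exact Or.inl ⟨hxE, hpx, hxu⟩
      · refine Or.inr ⟨hxE, not_lt.1 fun hxv => ?_, hxq⟩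
        exact hgap.notMem_of_mem_left hxE ⟨lt_of_not_ge hxu, hxv⟩
    have hpow : 0 ≤ (1 - ρ) ^ k := pow_nonneg (sub_nonneg.2 h.le_one) k
    calc volume (E ∩ Icc p q) ≤ volume (E ∩ Icc p u) + volume (E ∩ Icc v q) :=
          (measure_mono hcover).trans (measure_union_le _ _)
      _ ≤ ENNReal.ofReal ((1 - ρ) ^ k * (u - p)) + ENNReal.ofReal ((1 - ρ) ^ k * (q - v)) :=
          add_le_add (ih hp (by linarith)) (ih (by linarith) hq)
      _ = ENNReal.ofReal ((1 - ρ) ^ k * (u - p) + (1 - ρ) ^ k * (q - v)) :=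
          (ENNReal.ofReal_add (by nlinarith) (by nlinarith)).symm
      _ ≤ ENNReal.ofReal ((1 - ρ) ^ (k + 1) * (q - p)) :=
          ENNReal.ofReal_le_ofReal (by rw [pow_succ]; nlinarith)

theorem volume_eq_zero (h : PorousInUnitInterval ρ E) (hρ : 0 < ρ) (hE : E ⊆ Icc 0 1) :
    volume E = 0 := by
  have hlim : Tendsto (fun k : ℕ => ENNReal.ofReal ((1 - ρ) ^ k * (1 - 0))) atTop (𝓝 0) := by
    simpa using ENNReal.tendsto_ofReal
      (tendsto_pow_atTop_nhds_zero_of_lt_one (sub_nonneg.2 h.le_one) (by linarith))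
  refine le_antisymm (ge_of_tendsto' hlim fun k => ?_) zero_le
  calc volume E = volume (E ∩ Icc 0 1) := by rw [inter_eq_left.2 hE]
    _ ≤ _ := h.volume_inter_Icc_le hρ.le k le_rfl le_rfl

end PorousInUnitInterval

theorem mem_starN_coe {A : Set ℕ} {x : ℕ → ℕ} : (↑x : SN) ∈ starN A ↔ ∀ᶠ i in 𝓗, x i ∈ A :=
  Iff.rfl

theorem infInterval_coe_iff {a b : ℕ → ℕ} :
    InfInterval ↑a ↑b ↔ ∀ m : ℕ, ∀ᶠ i in 𝓗, a i + m < b i :=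
  forall_congr' fun _ => Filter.Germ.coe_lt

theorem tendsto_sub_of_infInterval {a b : ℕ → ℕ} (h : InfInterval ↑a ↑b) :
    Tendsto (fun i => (b i : ℝ) - a i) 𝓗 atTop := by
  refine tendsto_atTop.2 fun C => (infInterval_coe_iff.1 h ⌈C⌉₊).mono fun i hi => ?_
  have : (a i : ℝ) + ⌈C⌉₊ < b i := by exact_mod_cast hi
  linarith [Nat.le_ceil C]

theorem eventually_disjoint_of_Icc_inter_starN_eq_empty {A : Set ℕ} {c d : ℕ → ℕ}
    (h : Icc (↑c : SN) ↑d ∩ starN A = ∅) : ∀ᶠ i in 𝓗, Disjoint (Icc (c i) (d i)) A := by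
  by_contra hne
  obtain ⟨x, hx⟩ := ((Ultrafilter.eventually_not.2 hne).mono fun i hi => by
    simpa only [Set.not_disjoint_iff] using hi).choice
  have hmem : (↑x : SN) ∈ Icc (↑c : SN) ↑d ∩ starN A :=
    ⟨⟨Filter.Germ.coe_le.2 (hx.mono fun _ hi => hi.1.1),
      Filter.Germ.coe_le.2 (hx.mono fun _ hi => hi.1.2)⟩, hx.mono fun _ hi => hi.2⟩
  exact notMem_empty _ (h ▸ hmem)

noncomputable def relPos (a b x : ℕ → ℕ) (i : ℕ) : ℝ := ((x i : ℝ) - a i) / ((b i : ℝ) - a i)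

-- When `a i = b i` the junk value `0 / 0 = 0` keeps `relPos` in `[0, 1]`.
theorem relPos_mem_Icc {a b x : ℕ → ℕ} {i : ℕ} (hax : a i ≤ x i) (hxb : x i ≤ b i) :
    relPos a b x i ∈ Icc 0 1 := by
  have hax' : (a i : ℝ) ≤ x i := by exact_mod_cast hax
  have hxb' : (x i : ℝ) ≤ b i := by exact_mod_cast hxb
  exact ⟨div_nonneg (by linarith) (by linarith), div_le_one_of_le₀ (by linarith) (by linarith)⟩

theorem relPos_le_relPos {a b x x' : ℕ → ℕ} {i : ℕ} (hab : a i ≤ b i) (hx : x i ≤ x' i) :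
    relPos a b x i ≤ relPos a b x' i := by
  have hab' : (a i : ℝ) ≤ b i := by exact_mod_cast hab
  have hx' : (x i : ℝ) ≤ x' i := by exact_mod_cast hx
  exact div_le_div_of_nonneg_right (by linarith) (by linarith)

theorem relPos_sub_relPos (a b x x' : ℕ → ℕ) (i : ℕ) :
    relPos a b x' i - relPos a b x i = ((x' i : ℝ) - x i) / ((b i : ℝ) - a i) := by
  rw [relPos, relPos, div_sub_div_same, sub_sub_sub_cancel_right]

theorem exists_tendsto_relPos {a b x : ℕ → ℕ} (hx : ∀ᶠ i in 𝓗, a i ≤ x i ∧ x i ≤ b i) :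
    ∃ r ∈ Icc (0 : ℝ) 1, Tendsto (relPos a b x) 𝓗 (𝓝 r) :=
  isCompact_Icc.ultrafilter_le_nhds (.map (relPos a b x) (hyperfilter ℕ))
    (le_principal_iff.2 (hx.mono fun _ hi => relPos_mem_Icc hi.1 hi.2))

theorem toR_sub_div_toR_sub (a b c d : ℕ → ℕ) :
    (toR ↑d - toR ↑c) / (toR ↑b - toR ↑a) =
      Hyperreal.ofSeq fun i => ((d i : ℝ) - c i) / ((b i : ℝ) - a i) :=
  rfl

-- `stI` is phrased with the deprecated `Hyperreal.st`.
set_option linter.deprecated false in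
theorem stI_coe_eq_of_tendsto {a b x : ℕ → ℕ} {r : ℝ} (h : Tendsto (relPos a b x) 𝓗 (𝓝 r)) :
    stI ↑a ↑b ↑x = r := by
  rw [stI, Hyperreal.st_eq, toR_sub_div_toR_sub]
  exact Hyperreal.stdPart_of_tendsto h

theorem exists_of_mem_image_stI {A : Set ℕ} {a b : ℕ → ℕ} {s : ℝ}
    (hs : s ∈ stI ↑a ↑b '' (starN A ∩ Icc ↑a ↑b)) :
    s ∈ Icc 0 1 ∧ ∃ x : ℕ → ℕ, (∀ᶠ i in 𝓗, x i ∈ A) ∧ Tendsto (relPos a b x) 𝓗 (𝓝 s) := by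
  obtain ⟨x, ⟨hxA, hax, hxb⟩, rfl⟩ := hs
  induction x using Filter.Germ.inductionOn with | h x => ?_
  obtain ⟨r, hr, hlim⟩ :=
    exists_tendsto_relPos ((Filter.Germ.coe_le.1 hax).and (Filter.Germ.coe_le.1 hxb))
  rw [stI_coe_eq_of_tendsto hlim]
  exact ⟨hr, x, mem_starN_coe.1 hxA, hlim⟩

def HasSmallGaps (A : Set ℕ) (n a b : ℕ) : Prop :=
  ∀ u v : ℕ, a ≤ u → v ≤ b → Disjoint (Icc u v) A → n * (v - u) ≤ b - a

theorem exists_long_gaps {A : Set ℕ} {n : ℕ} (h : ∀ a b, a + n ≤ b → ¬HasSmallGaps A n a b)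
    (c d : ℕ → ℕ) :
    ∃ u v : ℕ → ℕ, ∀ i, c i + n ≤ d i →
      c i ≤ u i ∧ u i < v i ∧ v i ≤ d i ∧ Disjoint (Icc (u i) (v i)) A ∧
        d i - c i < n * (v i - u i) := by
  have : ∀ i, ∃ uv : ℕ × ℕ, c i + n ≤ d i →
      c i ≤ uv.1 ∧ uv.1 < uv.2 ∧ uv.2 ≤ d i ∧ Disjoint (Icc uv.1 uv.2) A ∧
        d i - c i < n * (uv.2 - uv.1) := by
    intro i
    by_cases hi : c i + n ≤ d i
    · obtain ⟨u, v, hu, hv, hdisj, hlong⟩ : ∃ u v, c i ≤ u ∧ v ≤ d i ∧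
          Disjoint (Icc u v) A ∧ d i - c i < n * (v - u) := by
        simpa [HasSmallGaps] using h _ _ hi
      have huv : u < v := Nat.lt_of_sub_pos (Nat.pos_of_ne_zero fun h0 => by simp [h0] at hlong)
      exact ⟨(u, v), fun _ => ⟨hu, huv, hv, hdisj, hlong⟩⟩
    · exact ⟨(0, 0), fun h' => absurd h' hi⟩
  choose uv huv using this
  exact ⟨fun i => (uv i).1, fun i => (uv i).2, huv⟩

noncomputable def pointAt (a b : ℕ → ℕ) (p : ℝ) (i : ℕ) : ℕ := a i + ⌊p * ((b i : ℝ) - a i)⌋₊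

section pointAt

variable {a b : ℕ → ℕ} {p q : ℝ}

theorem pointAt_le {i : ℕ} (hq : q ≤ 1) (hab : a i ≤ b i) : pointAt a b q i ≤ b i := by
  have hab' : (0 : ℝ) ≤ (b i : ℝ) - a i := sub_nonneg.2 (by exact_mod_cast hab)
  have : ⌊q * ((b i : ℝ) - a i)⌋₊ ≤ b i - a i :=
    Nat.floor_le_of_le (by push_cast [hab]; nlinarith)
  unfold pointAt
  omega

theorem tendsto_relPos_pointAt (hab : InfInterval ↑a ↑b) (hp : 0 ≤ p) :
    Tendsto (relPos a b (pointAt a b p)) 𝓗 (𝓝 p) := by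
  have : relPos a b (pointAt a b p) =
      (fun L : ℝ => (⌊p * L⌋₊ : ℝ) / L) ∘ fun i => (b i : ℝ) - a i := by
    funext i
    simp [relPos, pointAt]
  rw [this]
  exact (tendsto_nat_floor_mul_div_atTop hp).comp (tendsto_sub_of_infInterval hab)

theorem eventually_pointAt_add_le (hab : InfInterval ↑a ↑b) (hp : 0 ≤ p) (hpq : p < q) (n : ℕ) :
    ∀ᶠ i in 𝓗, pointAt a b p i + n ≤ pointAt a b q i := by
  filter_upwards [(tendsto_sub_of_infInterval hab).eventually_ge_atTop ((n + 1) / (q - p))]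
    with i hi
  have hL : 0 ≤ (b i : ℝ) - a i := le_trans (by have := sub_pos.2 hpq; positivity) hi
  rw [div_le_iff₀ (sub_pos.2 hpq)] at hi
  have h1 := Nat.floor_le (mul_nonneg hp hL)
  have h2 := Nat.lt_floor_add_one (q * ((b i : ℝ) - a i))
  have : (⌊p * ((b i : ℝ) - a i)⌋₊ : ℝ) + n < ⌊q * ((b i : ℝ) - a i)⌋₊ + 1 := by nlinarith
  have : ⌊p * ((b i : ℝ) - a i)⌋₊ + n < ⌊q * ((b i : ℝ) - a i)⌋₊ + 1 := by exact_mod_cast this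
  unfold pointAt
  omega

end pointAt

theorem disjoint_image_stI_Ioo {A : Set ℕ} {a b u v : ℕ → ℕ} {su sv : ℝ}
    (hab : ∀ᶠ i in 𝓗, a i ≤ b i) (hgap : ∀ᶠ i in 𝓗, Disjoint (Icc (u i) (v i)) A)
    (hu : Tendsto (relPos a b u) 𝓗 (𝓝 su)) (hv : Tendsto (relPos a b v) 𝓗 (𝓝 sv)) :
    Disjoint (stI ↑a ↑b '' (starN A ∩ Icc ↑a ↑b)) (Ioo su sv) := by
  refine Set.disjoint_left.2 fun s hs ⟨hsu, hsv⟩ => ?_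
  obtain ⟨-, x, hxA, hx⟩ := exists_of_mem_image_stI hs
  obtain ⟨i, hab, hgap, hxA, hux, hxv⟩ := (hab.and (hgap.and (hxA.and
    ((hu.eventually_lt hx hsu).and (hx.eventually_lt hv hsv))))).exists
  have hux' : u i ≤ x i := le_of_lt <| lt_of_not_ge fun h => (relPos_le_relPos hab h).not_gt hux
  have hxv' : x i ≤ v i := le_of_lt <| lt_of_not_ge fun h => (relPos_le_relPos hab h).not_gt hxv
  exact Set.disjoint_left.1 hgap ⟨hux', hxv'⟩ hxA

theorem porousInUnitInterval_image_stI {A : Set ℕ} {n : ℕ} (hn : 0 < n) {a b : ℕ → ℕ}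
    (hab : InfInterval ↑a ↑b) (hgaps : ∀ c d, c + n ≤ d → ¬HasSmallGaps A n c d) :
    PorousInUnitInterval (1 / n) (stI ↑a ↑b '' (starN A ∩ Icc ↑a ↑b)) := by
  intro p q hp hpq hq
  -- The long gaps `[u i, v i]` of `A` between the points `c i`, `d i` at relative positions
  -- `p`, `q` have standard parts enclosing a gap of the image of length at least `(q - p) / n`.
  set c := pointAt a b p
  set d := pointAt a b q
  obtain ⟨u, v, huv⟩ := exists_long_gaps hgaps c d
  have hab' : ∀ᶠ i in 𝓗, a i ≤ b i := (infInterval_coe_iff.1 hab 0).mono fun _ hi => hi.le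
  have hgood := (eventually_pointAt_add_le hab hp hpq n).mono huv
  have hdb : ∀ᶠ i in 𝓗, d i ≤ b i := hab'.mono fun _ => pointAt_le hq
  have hc := tendsto_relPos_pointAt hab hp
  have hd := tendsto_relPos_pointAt hab (hp.trans hpq.le)
  obtain ⟨su, -, hsu⟩ := exists_tendsto_relPos (a := a) (b := b) (x := u) <| by
    filter_upwards [hgood, hdb] with i hi hdbi
    exact ⟨(Nat.le_add_right _ _).trans hi.1, by omega⟩
  obtain ⟨sv, -, hsv⟩ := exists_tendsto_relPos (a := a) (b := b) (x := v) <| by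
    filter_upwards [hgood, hdb] with i hi hdbi
    exact ⟨(Nat.le_add_right _ _).trans (hi.1.trans hi.2.1.le), by omega⟩
  refine ⟨su, sv, ?_, ?_, ?_,
    disjoint_image_stI_Ioo hab' (hgood.mono fun _ hi => hi.2.2.2.1) hsu hsv⟩
  · exact le_of_tendsto_of_tendsto hc hsu <| by
      filter_upwards [hab', hgood] with i h1 h2 using relPos_le_relPos h1 h2.1
  · exact le_of_tendsto_of_tendsto hsv hd <| by
      filter_upwards [hab', hgood] with i h1 h2 using relPos_le_relPos h1 h2.2.2.1
  · have hlim : Tendsto (fun i => (n : ℝ) * (relPos a b v i - relPos a b u i)) 𝓗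
        (𝓝 (n * (sv - su))) := (hsv.sub hsu).const_mul _
    have hlen : q - p ≤ n * (sv - su) := le_of_tendsto_of_tendsto (hd.sub hc) hlim <| by
      filter_upwards [hab', hgood] with i h1 h2
      obtain ⟨hcu, huv, hvd, -, hlong⟩ := h2
      have hlong' : (d i : ℝ) - c i ≤ n * ((v i : ℝ) - u i) := by
        have : ((d i - c i : ℕ) : ℝ) ≤ ((n * (v i - u i) : ℕ) : ℝ) := by exact_mod_cast hlong.le
        push_cast [Nat.cast_sub (hcu.trans (huv.le.trans hvd)), Nat.cast_sub huv.le] at this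
        exact this
      simp only [relPos_sub_relPos, ← mul_div_assoc]
      exact div_le_div_of_nonneg_right hlong' (sub_nonneg.2 (by exact_mod_cast h1))
    rw [one_div, inv_mul_le_iff₀ (by exact_mod_cast hn)]
    exact hlen

theorem exists_hasSmallGaps_of_lam_pos {A : Set ℕ} {y z : SN} (hyz : InfInterval y z)
    (hlam : 0 < lam (starN A) y z) {n : ℕ} (hn : 0 < n) :
    ∃ a b, a + n ≤ b ∧ HasSmallGaps A n a b := by
  by_contra! hgaps
  induction y using Filter.Germ.inductionOn with | h a => ?_
  induction z using Filter.Germ.inductionOn with | h b => ?_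
  have hnull := (porousInUnitInterval_image_stI hn hyz hgaps).volume_eq_zero (by positivity)
    fun _ hs => (exists_of_mem_image_stI hs).1
  simp [lam, hnull] at hlam

theorem gap_coe_eq_zero {A : Set ℕ} {a b : ℕ → ℕ} (hab : ∀ i, a i < b i)
    (hgaps : ∀ i, HasSmallGaps A (i + 1) (a i) (b i)) : gap (starN A) ↑a ↑b = 0 := by
  refine le_antisymm (Real.sSup_nonpos fun r hr => ?_) (Real.sSup_nonneg fun r hr => hr.1)
  obtain ⟨-, c, d, ⟨hac, -⟩, ⟨-, hdb⟩, hcd, hempty, hr⟩ := hr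
  induction c using Filter.Germ.inductionOn with | h c => ?_
  induction d using Filter.Germ.inductionOn with | h d => ?_
  rw [toR_sub_div_toR_sub] at hr
  refine ge_of_tendsto
    (tendsto_one_div_add_atTop_nhds_zero_nat.mono_left Nat.hyperfilter_le_atTop) ?_
  filter_upwards [Hyperreal.ofSeq_le_ofSeq.1 hr, Filter.Germ.coe_le.1 hac,
    Filter.Germ.coe_le.1 hdb, Filter.Germ.coe_le.1 hcd,
    eventually_disjoint_of_Icc_inter_starN_eq_empty hempty]
    with i hri haci hdbi hcdi hdisj
  have hsmall : ((i + 1) * (d i - c i) : ℕ) ≤ (b i - a i : ℕ) := hgaps i _ _ haci hdbi hdisj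
  have hsmall' : ((i : ℝ) + 1) * ((d i : ℝ) - c i) ≤ (b i : ℝ) - a i := by
    have : (((i + 1) * (d i - c i) : ℕ) : ℝ) ≤ ((b i - a i : ℕ) : ℝ) := by exact_mod_cast hsmall
    push_cast [Nat.cast_sub hcdi, Nat.cast_sub (hab i).le] at this
    exact this
  have hL : (0 : ℝ) < (b i : ℝ) - a i := sub_pos.2 (by exact_mod_cast hab i)
  refine hri.trans ?_
  rw [div_le_div_iff₀ hL (by positivity)]
  linarith

theorem stmt_19 (A B : Set ℕ) (hA : SIM A) (h : FinEmbed A B) :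
    ∃ y z : SN, InfInterval y z ∧ gap (starN A) y z = 0 ∧
      ∃ t : SN, ∀ x ∈ starN A ∩ Set.Icc y z, t + x ∈ starN B := by
  obtain ⟨y, z, hyz, -, hlam⟩ := hA.2
  have hsel : ∀ i : ℕ, ∃ a b t : ℕ, a + (i + 1) ≤ b ∧ HasSmallGaps A (i + 1) a b ∧
      ∀ x ∈ A ∩ Icc a b, t + x ∈ B := by
    intro i
    obtain ⟨a, b, hab, hgaps⟩ := exists_hasSmallGaps_of_lam_pos hyz hlam i.succ_pos
    obtain ⟨t, ht⟩ := h ((finite_Icc a b).inter_of_right A).toFinset (by simp)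
    exact ⟨a, b, t, hab, hgaps, fun x hx => ht x (by simpa using hx)⟩
  choose a b t hab hgaps ht using hsel
  refine ⟨↑a, ↑b, infInterval_coe_iff.2 fun m => ?_, gap_coe_eq_zero (fun i => by grind) hgaps,
    ↑t, ?_⟩
  · filter_upwards [Nat.hyperfilter_le_atTop (eventually_ge_atTop m)] with i hi
    grind
  · rintro x ⟨hxA, hax, hxb⟩
    induction x using Filter.Germ.inductionOn with | h x => ?_
    filter_upwards [mem_starN_coe.1 hxA, Filter.Germ.coe_le.1 hax, Filter.Germ.coe_le.1 hxb]
      with i h1 h2 h3 using ht i _ ⟨h1, h2, h3⟩
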